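/- arXiv:2511.20488 — 4 statements merged into one kernel-verified Lean document; each statement's English description precedes it below -/
import Mathlib

section
/- Let p be an odd prime, F = Q_p, and ψ an additive character of F of level 0. If a ∈ F has valuation ν(a) = -1, then the integral I(a,b) = ∫_{o^×} ψ(ax² + bx) dx is nonzero only if ν(b) ≥ -1. -/
/-!
If `ν(b) ≤ -2`, put `t = p^(-1-ν(b))`, so `ν(t) ≥ 1`, `‖a t‖ ≤ 1` and `‖b t‖ = p`. The unit
sphere is invariant under `x ↦ x + t`, and on it `a(x+t)² + b(x+t) = ax² + bx + bt` modulo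
`ℤ_p`, so translating by `t` multiplies the integral by `ψ(bt)`. Since `ψ` is trivial on `ℤ_p`
but not on `p⁻¹ℤ_p = ℤ_p + ℕ • (b t)`, `ψ(bt) ≠ 1`, and the integral vanishes.
-/

open MeasureTheory

theorem IsUltrametricDist.norm_add_eq_iff_of_norm_lt {E : Type*} [SeminormedAddCommGroup E]
    [IsUltrametricDist E] {x t : E} {r : ℝ} (ht : ‖t‖ < r) : ‖x + t‖ = r ↔ ‖x‖ = r := by
  have key : ∀ {y s : E}, ‖s‖ < r → ‖y‖ = r → ‖y + s‖ = r := fun hs hy ↦ by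
    rw [norm_add_eq_max_of_norm_ne_norm (by linarith), hy, max_eq_left hs.le]
  refine ⟨fun h ↦ ?_, key ht⟩
  simpa using key (s := -t) (by rwa [norm_neg]) h

theorem setIntegral_eq_zero_of_add_right_eq_smul {G E 𝕜 : Type*} [AddGroup G] [MeasurableSpace G]
    [MeasurableAdd G] [NormedAddCommGroup E] [NormedSpace ℝ E] [NontriviallyNormedField 𝕜]
    [NormedSpace 𝕜 E] [SMulCommClass ℝ 𝕜 E] {μ : Measure G} [μ.IsAddRightInvariant]
    {S : Set G} (hS : MeasurableSet S) {t : G} (hSt : ∀ x, x + t ∈ S ↔ x ∈ S)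
    {f : G → E} {c : 𝕜} (hc : c ≠ 1) (hf : ∀ x ∈ S, f (x + t) = c • f x) :
    ∫ x in S, f x ∂μ = 0 := by
  have hshift : ∀ x, S.indicator f (x + t) = c • S.indicator f x := fun x ↦ by
    by_cases hx : x ∈ S
    · simp [Set.indicator_of_mem ((hSt x).2 hx), Set.indicator_of_mem hx, hf x hx]
    · simp [Set.indicator_of_notMem (mt (hSt x).1 hx), Set.indicator_of_notMem hx]
  have key := integral_add_right_eq_self (μ := μ) (S.indicator f) t
  simp only [hshift, integral_smul, integral_indicator hS] at key
  have : (c - 1) • ∫ x in S, f x ∂μ = 0 := by rw [sub_smul, one_smul, key, sub_self]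
  exact (smul_eq_zero.1 this).resolve_left (sub_ne_zero.2 hc)

theorem Padic.exists_norm_sub_natCast_mul_le_one {p : ℕ} [Fact p.Prime] {y z : ℚ_[p]}
    (hy : ‖y‖ = p) (hz : ‖z‖ ≤ p) : ∃ n : ℕ, ‖z - n * y‖ ≤ 1 := by
  have hp : (0 : ℝ) < p := by exact_mod_cast (Fact.out : p.Prime).pos
  have hy0 : y ≠ 0 := norm_pos_iff.1 (hy ▸ hp)
  let w : ℤ_[p] := ⟨z / y, by rwa [norm_div, hy, div_le_one hp]⟩
  obtain ⟨n, -, hn⟩ := PadicInt.exists_mem_range w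
  rw [IsLocalRing.mem_maximalIdeal, PadicInt.mem_nonunits, PadicInt.norm_def] at hn
  push_cast at hn
  refine ⟨n, ?_⟩
  have : ‖z - n * y‖ < p ^ (0 + 1 : ℤ) := by
    rw [show z - n * y = (z / y - n) * y by field_simp, norm_mul, hy, zero_add, zpow_one]
    exact mul_lt_of_lt_one_left hp hn
  simpa using (Padic.norm_le_pow_iff_norm_lt_pow_add_one _ 0).2 this

theorem AddChar.padic_apply_ne_one_of_norm_eq {p : ℕ} [Fact p.Prime] {M : Type*} [Monoid M]
    (ψ : AddChar ℚ_[p] M) (htriv : ∀ x : ℚ_[p], ‖x‖ ≤ 1 → ψ x = 1)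
    (hnontriv : ∃ x : ℚ_[p], ‖x‖ ≤ p ∧ ψ x ≠ 1) {y : ℚ_[p]} (hy : ‖y‖ = p) : ψ y ≠ 1 := by
  obtain ⟨z, hz, hψz⟩ := hnontriv
  obtain ⟨n, hn⟩ := Padic.exists_norm_sub_natCast_mul_le_one hy hz
  intro hψy
  apply hψz
  rw [← add_sub_cancel (n * y) z, ψ.map_add_eq_mul, htriv _ hn, ← nsmul_eq_mul,
    ψ.map_nsmul_eq_pow, hψy, one_pow, one_mul]

theorem AddChar.padic_apply_quadratic_add {p : ℕ} [Fact p.Prime] {M : Type*} [CommMonoid M]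
    (ψ : AddChar ℚ_[p] M) (htriv : ∀ x : ℚ_[p], ‖x‖ ≤ 1 → ψ x = 1) {a b x t : ℚ_[p]}
    (hx : ‖x‖ ≤ 1) (ht : ‖t‖ ≤ 1) (hat : ‖a * t‖ ≤ 1) :
    ψ (a * (x + t) ^ 2 + b * (x + t)) = ψ (b * t) * ψ (a * x ^ 2 + b * x) := by
  have hxt : ‖x + (x + t)‖ ≤ 1 :=
    (Padic.nonarchimedean _ _).trans (max_le hx ((Padic.nonarchimedean _ _).trans (max_le hx ht)))
  have hcross : ‖a * t * (x + (x + t))‖ ≤ 1 := by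
    rw [norm_mul]; exact mul_le_one₀ hat (norm_nonneg _) hxt
  rw [show a * (x + t) ^ 2 + b * (x + t) =
      a * t * (x + (x + t)) + (b * t + (a * x ^ 2 + b * x)) by ring,
    ψ.map_add_eq_mul, ψ.map_add_eq_mul, htriv _ hcross, one_mul]

theorem stmt1_general (p : ℕ) [Fact p.Prime]
    [MeasurableSpace ℚ_[p]] [BorelSpace ℚ_[p]]
    (μ : Measure ℚ_[p]) [μ.IsAddHaarMeasure]
    (ψ : ℚ_[p] → ℂ)
    (hψadd : ∀ x y : ℚ_[p], ψ (x + y) = ψ x * ψ y)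
    (hψtriv : ∀ x : ℚ_[p], ‖x‖ ≤ 1 → ψ x = 1)
    (hψnontriv : ∃ x : ℚ_[p], ‖x‖ ≤ (p : ℝ) ∧ ψ x ≠ 1)
    (a b : ℚ_[p]) (ha : a.valuation = -1) :
    (∫ x in {x : ℚ_[p] | ‖x‖ = 1}, ψ (a * x ^ 2 + b * x) ∂μ) ≠ 0 →
      -1 ≤ b.valuation := by
  intro hI
  by_contra! hb
  let χ : AddChar ℚ_[p] ℂ := ⟨ψ, hψtriv 0 (by simp), hψadd⟩
  have hp : (1 : ℝ) < p := by exact_mod_cast (Fact.out : p.Prime).one_lt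
  have ha0 : a ≠ 0 := by rintro rfl; simp at ha
  have hb0 : b ≠ 0 := by rintro rfl; simp at hb
  set t : ℚ_[p] := (p : ℚ_[p]) ^ (-1 - b.valuation)
  have ht : ‖t‖ = (p : ℝ) ^ (1 + b.valuation) := by rw [Padic.norm_p_zpow]; ring_nf
  have ht1 : ‖t‖ < 1 := by rw [ht]; exact zpow_lt_one_of_neg₀ hp (by omega)
  have hat : ‖a * t‖ ≤ 1 := by
    rw [norm_mul, Padic.norm_eq_zpow_neg_valuation ha0, ha, ht, ← zpow_add₀ (by positivity)]
    exact zpow_le_one_of_nonpos₀ hp.le (by omega)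
  have hbt : ‖b * t‖ = p := by
    rw [norm_mul, Padic.norm_eq_zpow_neg_valuation hb0, ht, ← zpow_add₀ (by positivity)]
    ring_nf; exact zpow_one _
  refine hI (setIntegral_eq_zero_of_add_right_eq_smul (t := t) ?_ ?_
    (χ.padic_apply_ne_one_of_norm_eq hψtriv hψnontriv hbt) ?_)
  · exact measurableSet_eq_fun measurable_norm measurable_const
  · exact fun x ↦ IsUltrametricDist.norm_add_eq_iff_of_norm_lt ht1
  · intro x hx
    exact χ.padic_apply_quadratic_add hψtriv (le_of_eq hx) ht1.le hat

/-- Lemma 3.8 (k = 1 case): if `ν(a) = -1` then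
`I(a,b) = ∫_{o^×} ψ(ax² + bx) dx` is nonzero only if `ν(b) ≥ -1`. -/
theorem stmt1 (p : ℕ) [Fact p.Prime] (hp : Odd p)
    [MeasurableSpace ℚ_[p]] [BorelSpace ℚ_[p]]
    (μ : Measure ℚ_[p]) [μ.IsAddHaarMeasure]
    (hμ : μ {x : ℚ_[p] | ‖x‖ ≤ 1} = 1)
    (ψ : ℚ_[p] → ℂ)
    (hψadd : ∀ x y : ℚ_[p], ψ (x + y) = ψ x * ψ y)
    (hψtriv : ∀ x : ℚ_[p], ‖x‖ ≤ 1 → ψ x = 1)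
    (hψnontriv : ∃ x : ℚ_[p], ‖x‖ ≤ (p : ℝ) ∧ ψ x ≠ 1)
    (a b : ℚ_[p]) (ha : a.valuation = -1) :
    (∫ x in {x : ℚ_[p] | ‖x‖ = 1}, ψ (a * x ^ 2 + b * x) ∂μ) ≠ 0 →
      -1 ≤ b.valuation :=
  stmt1_general p μ ψ hψadd hψtriv hψnontriv a b ha
end

section
/- Let D be a p^k-invariant subset of a p-adic field F and suppose f: D → C is k-additive with additive parameter a(x) relative to ψ (i.e., f(x+δ) = f(x)ψ(a(x)δ) for all δ ∈ p^k). Then ∫_D f(x) dx = p^{-k} Σ_{x ∈ D(f,k)} f(x), where D(f,k) = { x ∈ D/p^k : a(x) ∈ p^{-k + c(ψ)} }. -/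
open MeasureTheory
open scoped Classical

/-- The basic `p`-adic stationary phase evaluation: if `f` is `k`-additive on a
`𝔭^k`-invariant set `D` with additive parameter `a(x)` relative to `ψ`, then
`∫_D f(x) dx = p^{-k} Σ_{x ∈ D(f,k)} f(x)`, where `D(f,k)` consists of the
classes `x ∈ D/𝔭^k` (represented by a set `R` of representatives) with
`a(x) ∈ 𝔭^{-k+c(ψ)}`. -/
theorem stmt4 (p : ℕ) [Fact p.Prime] (hp : Odd p)
    [MeasurableSpace ℚ_[p]] [BorelSpace ℚ_[p]]
    (μ : Measure ℚ_[p]) [μ.IsAddHaarMeasure]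
    (hμ : μ {x : ℚ_[p] | ‖x‖ ≤ 1} = 1)
    (ψ : ℚ_[p] → ℂ)
    (hψadd : ∀ x y : ℚ_[p], ψ (x + y) = ψ x * ψ y)
    (cψ : ℤ)
    (hψlevel : ∀ x : ℚ_[p], ‖x‖ ≤ (p : ℝ) ^ (-cψ) → ψ x = 1)
    (hψlevel' : ∃ x : ℚ_[p], ‖x‖ ≤ (p : ℝ) ^ (-cψ + 1) ∧ ψ x ≠ 1)
    (k : ℕ) (D : Set ℚ_[p]) (hDmeas : MeasurableSet D)
    (hDinv : ∀ x ∈ D, ∀ δ : ℚ_[p], ‖δ‖ ≤ (p : ℝ) ^ (-(k : ℤ)) → x + δ ∈ D)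
    (f : ℚ_[p] → ℂ) (a : ℚ_[p] → ℚ_[p])
    (hadd : ∀ x ∈ D, ∀ δ : ℚ_[p], ‖δ‖ ≤ (p : ℝ) ^ (-(k : ℤ)) →
      f (x + δ) = f x * ψ (a x * δ))
    (R : Finset ℚ_[p]) (hRD : ∀ r ∈ R, r ∈ D)
    (hR : ∀ x ∈ D, ∃! r : ℚ_[p], r ∈ R ∧ ‖x - r‖ ≤ (p : ℝ) ^ (-(k : ℤ))) :
    ∫ x in D, f x ∂μ =
      ((p : ℂ)) ^ (-(k : ℤ)) *
        ∑ r ∈ R, if ‖a r‖ ≤ (p : ℝ) ^ ((k : ℤ) - cψ) then f r else 0 := by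
  have hp1 : (1:ℝ) < p := by exact_mod_cast (Fact.out : p.Prime).one_lt
  have hp0 : (0:ℝ) < p := lt_trans one_pos hp1
  set ε : ℝ := (p:ℝ) ^ (-(k:ℤ)) with hεdef
  have hε0 : 0 < ε := zpow_pos hp0 _
  -- ψ is continuous (it is locally constant)
  have hψcont : Continuous ψ := by
    rw [continuous_iff_continuousAt]
    intro x
    have h : (fun _ : ℚ_[p] => ψ x) =ᶠ[nhds x] ψ := by
      filter_upwards [Metric.ball_mem_nhds x (zpow_pos hp0 (-cψ))] with y hy
      have h1 : ‖y - x‖ ≤ (p:ℝ) ^ (-cψ) := le_of_lt (by simpa [dist_eq_norm] using hy)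
      have h2 := hψlevel _ h1
      calc ψ x = ψ x * ψ (y - x) := by rw [h2, mul_one]
        _ = ψ (x + (y - x)) := (hψadd _ _).symm
        _ = ψ y := by ring_nf
    exact tendsto_const_nhds.congr' h
  -- ball facts
  have hmemB : ∀ r x : ℚ_[p], x ∈ Metric.closedBall r ε ↔ ‖x - r‖ ≤ ε := by
    intro r x; rw [Metric.mem_closedBall, dist_eq_norm]
  have hBmeas : ∀ r : ℚ_[p], MeasurableSet (Metric.closedBall r ε) :=
    fun r => measurableSet_closedBall
  set B0 : Set ℚ_[p] := Metric.closedBall 0 ε with hB0def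
  have hB0mem : ∀ x : ℚ_[p], x ∈ B0 ↔ ‖x‖ ≤ ε := by
    intro x; rw [hB0def, hmemB, sub_zero]
  have hBadd : ∀ δ x : ℚ_[p], ‖δ‖ ≤ ε → (x + δ ∈ B0 ↔ x ∈ B0) := by
    intro δ x hδ
    rw [hB0mem, hB0mem]
    constructor
    · intro h
      calc ‖x‖ = ‖(x + δ) + (-δ)‖ := by ring_nf
        _ ≤ max ‖x + δ‖ ‖-δ‖ := Padic.nonarchimedean _ _
        _ ≤ ε := max_le h (by simpa using hδ)
    · intro h
      exact le_trans (Padic.nonarchimedean _ _) (max_le h hδ)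
  -- translation of set integrals
  have hshift : ∀ (g : ℚ_[p] → ℂ) (c : ℚ_[p]) (s t : Set ℚ_[p]),
      MeasurableSet s → MeasurableSet t → (∀ x, x + c ∈ s ↔ x ∈ t) →
      ∫ x in s, g x ∂μ = ∫ x in t, g (x + c) ∂μ := by
    intro g c s t hs ht hst
    rw [← integral_indicator hs, ← integral_indicator ht,
      ← integral_add_right_eq_self (s.indicator g) c]
    congr 1
    funext x
    by_cases hx : x ∈ t
    · rw [Set.indicator_of_mem hx, Set.indicator_of_mem ((hst x).2 hx)]
    · rw [Set.indicator_of_notMem hx,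
        Set.indicator_of_notMem (fun h => hx ((hst x).1 h))]
  -- measure of the small ball
  have hμball : μ B0 = (((p:ENNReal)) ^ k)⁻¹ := by
    have hcover : {x : ℚ_[p] | ‖x‖ ≤ 1} =
        ⋃ j ∈ Finset.range (p ^ k), Metric.closedBall ((j : ℚ_[p])) ε := by
      ext x
      simp only [Set.mem_setOf_eq, Set.mem_iUnion, Finset.mem_range]
      constructor
      · intro hx
        set z : ℤ_[p] := ⟨x, hx⟩ with hz
        refine ⟨z.appr k, z.appr_lt k, ?_⟩
        rw [hmemB]
        have h1 : ‖(z - (z.appr k : ℤ_[p]))‖ ≤ (p:ℝ) ^ (-(k:ℤ)) :=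
          (PadicInt.norm_le_pow_iff_mem_span_pow _ k).2 (PadicInt.appr_spec k z)
        have h2 : ((z - (z.appr k : ℤ_[p]) : ℤ_[p]) : ℚ_[p]) = x - (z.appr k : ℚ_[p]) := by
          rw [PadicInt.coe_sub, PadicInt.coe_natCast]
        rw [PadicInt.norm_def, h2] at h1
        exact h1
      · rintro ⟨j, hj, hx⟩
        rw [hmemB] at hx
        have hε1 : ε ≤ 1 := by
          calc ε ≤ (p:ℝ) ^ (0:ℤ) := zpow_le_zpow_right₀ (le_of_lt hp1) (by omega)
            _ = 1 := zpow_zero _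
        have hj1 : ‖((j:ℚ_[p]))‖ ≤ 1 := by
          have := Padic.norm_int_le_one (p := p) (j : ℤ)
          simpa using this
        calc ‖x‖ = ‖(x - j) + (j:ℚ_[p])‖ := by ring_nf
          _ ≤ max ‖x - (j:ℚ_[p])‖ ‖((j:ℚ_[p]))‖ := Padic.nonarchimedean _ _
          _ ≤ 1 := max_le (le_trans hx hε1) hj1
    have hdisj : Set.PairwiseDisjoint (↑(Finset.range (p ^ k)))
        (fun j : ℕ => Metric.closedBall ((j : ℚ_[p])) ε) := by
      intro i hi j hj hij
      simp only [Finset.coe_range, Set.mem_Iio] at hi hj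
      rw [Function.onFun, Set.disjoint_left]
      intro x hxi hxj
      rw [hmemB] at hxi hxj
      have h1 : ‖((i:ℚ_[p])) - (j:ℚ_[p])‖ ≤ ε := by
        calc ‖((i:ℚ_[p])) - (j:ℚ_[p])‖ = ‖((i:ℚ_[p]) - x) + (x - (j:ℚ_[p]))‖ := by ring_nf
          _ ≤ max ‖(i:ℚ_[p]) - x‖ ‖x - (j:ℚ_[p])‖ := Padic.nonarchimedean _ _
          _ ≤ ε := max_le (by rwa [norm_sub_rev]) hxj
      have h2 : ((p:ℤ) ^ k ∣ ((i:ℤ) - (j:ℤ))) := by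
        rw [← Padic.norm_int_le_pow_iff_dvd ((i:ℤ) - (j:ℤ)) k]
        push_cast
        exact h1
      have h3 : (i:ℤ) - (j:ℤ) = 0 := by
        apply Int.eq_zero_of_abs_lt_dvd h2
        have hpk : ((p:ℤ)) ^ k = ((p ^ k : ℕ) : ℤ) := by push_cast; ring
        rw [hpk, abs_sub_lt_iff]
        constructor <;> omega
      exact hij (by omega)
    have htrans : ∀ j : ℕ, μ (Metric.closedBall ((j : ℚ_[p])) ε) = μ B0 := by
      intro j
      have h : Metric.closedBall ((j : ℚ_[p])) ε = (fun x => (-(j:ℚ_[p])) + x) ⁻¹' B0 := by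
        ext x
        simp only [Set.mem_preimage]
        rw [hmemB, hB0mem, neg_add_eq_sub, norm_sub_rev]
      rw [h, measure_preimage_add]
    have h1 : (1 : ENNReal) = (p ^ k : ℕ) * μ B0 := by
      rw [← hμ, hcover, measure_biUnion_finset hdisj (fun j _ => hBmeas _)]
      simp only [htrans, Finset.sum_const, Finset.card_range, nsmul_eq_mul]
    have hpk0 : ((p:ENNReal)) ^ k ≠ 0 := by
      apply pow_ne_zero
      simpa using (Fact.out : p.Prime).pos.ne'
    have hpktop : ((p:ENNReal)) ^ k ≠ ⊤ := by
      exact ENNReal.pow_ne_top (ENNReal.natCast_ne_top p)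
    have hcast : ((p ^ k : ℕ) : ENNReal) = ((p:ENNReal)) ^ k := by push_cast; ring
    rw [hcast] at h1
    calc μ B0 = ((p:ENNReal) ^ k)⁻¹ * ((p:ENNReal) ^ k * μ B0) := by
          rw [← mul_assoc, ENNReal.inv_mul_cancel hpk0 hpktop, one_mul]
      _ = ((p:ENNReal) ^ k)⁻¹ := by rw [← h1, mul_one]
  have hμB0toReal : (μ B0).toReal = ε := by
    rw [hμball, ENNReal.toReal_inv]
    have : (((p:ENNReal)) ^ k).toReal = (p:ℝ) ^ k := by
      simp [ENNReal.toReal_pow]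
    rw [this, hεdef, zpow_neg, zpow_natCast]
  -- the character integral over the small ball
  have hJ : ∀ b : ℚ_[p], ∫ δ in B0, ψ (b * δ) ∂μ =
      if ‖b‖ ≤ (p:ℝ) ^ ((k:ℤ) - cψ) then ((μ B0).toReal : ℂ) else 0 := by
    intro b
    split_ifs with hb
    · have : ∫ δ in B0, ψ (b * δ) ∂μ = ∫ _ in B0, (1:ℂ) ∂μ := by
        apply setIntegral_congr_fun (hBmeas 0)
        intro δ hδ
        apply hψlevel
        rw [norm_mul]
        calc ‖b‖ * ‖δ‖ ≤ (p:ℝ) ^ ((k:ℤ) - cψ) * ε := by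
              apply mul_le_mul hb ((hB0mem δ).1 hδ) (norm_nonneg _)
              positivity
          _ = (p:ℝ) ^ (-cψ) := by
              rw [hεdef, ← zpow_add₀ hp0.ne']
              congr 1; ring
      rw [this, setIntegral_const]
      simp
      rfl
    · have hb0 : b ≠ 0 := by
        intro h0
        apply hb
        rw [h0, norm_zero]
        positivity
      obtain ⟨x0, hx0norm, hx0⟩ := hψlevel'
      set δ0 : ℚ_[p] := x0 * b⁻¹ with hδ0def
      have hbnorm : (p:ℝ) ^ ((k:ℤ) - cψ) < ‖b‖ := lt_of_not_ge hb
      have hval : (p:ℝ) ^ ((k:ℤ) - cψ + 1) ≤ ‖b‖ := by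
        rw [Padic.norm_eq_zpow_neg_valuation hb0] at hbnorm ⊢
        have := (zpow_lt_zpow_iff_right₀ hp1).1 hbnorm
        exact zpow_le_zpow_right₀ (le_of_lt hp1) (by omega)
      have hδ0norm : ‖δ0‖ ≤ ε := by
        rw [hδ0def, norm_mul, norm_inv]
        have hbpos : (0:ℝ) < (p:ℝ) ^ ((k:ℤ) - cψ + 1) := by positivity
        calc ‖x0‖ * ‖b‖⁻¹ ≤ (p:ℝ) ^ (-cψ + 1) * ((p:ℝ) ^ ((k:ℤ) - cψ + 1))⁻¹ := by
              apply mul_le_mul hx0norm _ (by positivity) (by positivity)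
              exact inv_anti₀ hbpos hval
          _ = ε := by
              rw [← zpow_neg, ← zpow_add₀ hp0.ne', hεdef]
              congr 1; ring
      have hψδ0 : ψ (b * δ0) ≠ 1 := by
        have h : b * δ0 = x0 := by
          rw [hδ0def]; field_simp
        rw [h]; exact hx0
      set J : ℂ := ∫ δ in B0, ψ (b * δ) ∂μ with hJdef
      have key : J = ψ (b * δ0) * J := by
        rw [hJdef]
        conv_lhs => rw [hshift (fun δ => ψ (b * δ)) δ0 B0 B0 (hBmeas 0) (hBmeas 0)
          (fun x => hBadd δ0 x hδ0norm)]
        have : ∀ x : ℚ_[p], ψ (b * (x + δ0)) = ψ (b * x) * ψ (b * δ0) := by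
          intro x
          rw [mul_add, hψadd]
        simp_rw [this]
        rw [integral_mul_const, mul_comm]
      have h0 : (ψ (b * δ0) - 1) * J = 0 := by
        rw [sub_mul, one_mul, ← key, sub_self]
      rcases mul_eq_zero.1 h0 with h | h
      · exact absurd (sub_eq_zero.1 h) hψδ0
      · exact h
  -- decomposition of D
  have hDeq : D = ⋃ r ∈ R, Metric.closedBall r ε := by
    ext x
    constructor
    · intro hx
      obtain ⟨r, ⟨hrR, hrx⟩, -⟩ := hR x hx
      exact Set.mem_biUnion hrR ((hmemB r x).2 hrx)
    · intro hx
      simp only [Set.mem_iUnion] at hx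
      obtain ⟨r, hrR, hxr⟩ := hx
      have h := hDinv r (hRD r hrR) (x - r) ((hmemB r x).1 hxr)
      simpa using h
  have hdisjR : Set.Pairwise (R : Set ℚ_[p]) (Function.onFun Disjoint fun r => Metric.closedBall r ε) := by
    intro r hr s hs hrs
    rw [Function.onFun, Set.disjoint_left]
    intro x hxr hxs
    have hxD : x ∈ D := by
      have h := hDinv r (hRD r hr) (x - r) ((hmemB r x).1 hxr)
      simpa using h
    obtain ⟨t, -, huniq⟩ := hR x hxD
    exact hrs ((huniq r ⟨hr, (hmemB r x).1 hxr⟩).trans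
      (huniq s ⟨hs, (hmemB s x).1 hxs⟩).symm)
  -- per-ball evaluation
  have hballcongr : ∀ r ∈ R, Set.EqOn f (fun x => f r * ψ (a r * (x - r)))
      (Metric.closedBall r ε) := by
    intro r hr x hx
    have h := hadd r (hRD r hr) (x - r) ((hmemB r x).1 hx)
    simpa using h
  have hint : ∀ r ∈ R, IntegrableOn f (Metric.closedBall r ε) μ := by
    intro r hr
    have hc : Continuous (fun x : ℚ_[p] => f r * ψ (a r * (x - r))) :=
      continuous_const.mul (hψcont.comp (continuous_const.mul
        (continuous_id.sub continuous_const)))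
    have hi : IntegrableOn (fun x : ℚ_[p] => f r * ψ (a r * (x - r)))
        (Metric.closedBall r ε) μ :=
      ContinuousOn.integrableOn_compact (isCompact_closedBall r ε) hc.continuousOn
    exact hi.congr_fun (fun x hx => (hballcongr r hr hx).symm) (hBmeas r)
  have hball : ∀ r ∈ R, ∫ x in Metric.closedBall r ε, f x ∂μ =
      (if ‖a r‖ ≤ (p:ℝ) ^ ((k:ℤ) - cψ) then f r else 0) * ((μ B0).toReal : ℂ) := by
    intro r hr
    have h1 : ∫ x in Metric.closedBall r ε, f x ∂μ =
        ∫ x in Metric.closedBall r ε, f r * ψ (a r * (x - r)) ∂μ :=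
      setIntegral_congr_fun (hBmeas r) (hballcongr r hr)
    have h2 : ∫ x in Metric.closedBall r ε, ψ (a r * (x - r)) ∂μ =
        ∫ δ in B0, ψ (a r * δ) ∂μ := by
      rw [hshift (fun x => ψ (a r * (x - r))) r (Metric.closedBall r ε) B0
        (hBmeas r) (hBmeas 0) ?_]
      · simp only [add_sub_cancel_right]
      · intro x
        rw [hmemB, hB0mem, add_sub_cancel_right]
    rw [h1, integral_const_mul, h2, hJ (a r)]
    split_ifs
    · ring
    · ring
  -- assemble
  rw [hDeq, integral_biUnion_finset R (fun r _ => hBmeas r) hdisjR hint,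
    Finset.sum_congr rfl hball, ← Finset.sum_mul, mul_comm]
  congr 1
  rw [hμB0toReal, hεdef]
  push_cast
  rfl
end

section
/- Let F = Q_p with uniformizer ϖ. For every positive integer c, GL₂(F) = ∪_{0 ≤ i ≤ c} B · n⁻(ϖ^i) · K₀(p^c), where B is the Borel subgroup of upper triangular matrices, n⁻(ϖ^i) = [[1,0],[ϖ^i,1]], and K₀(p^c) = { g ∈ GL₂(o) : the lower-left entry of g lies in p^c }. -/
private lemma stmt17_aux {p : ℕ} [Fact p.Prime]
    (g M Minv : Matrix (Fin 2) (Fin 2) ℚ_[p])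
    (hinv : Minv * M = 1)
    (hb0 : g 1 0 * Minv 0 0 + g 1 1 * Minv 1 0 = 0)
    (hg : IsUnit g.det) :
    IsUnit (g * Minv).det ∧ (g * Minv) 1 0 = 0 ∧ g = (g * Minv) * M := by
  refine ⟨?_, ?_, ?_⟩
  · have h : (g * Minv).det * M.det = g.det := by
      rw [← Matrix.det_mul, mul_assoc, hinv, mul_one]
    exact isUnit_of_mul_isUnit_left (h ▸ hg)
  · rw [Matrix.mul_apply, Fin.sum_univ_two]; exact hb0
  · rw [mul_assoc, hinv, mul_one]

/-- Lemma 3.1: the double coset decomposition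
`GL₂(ℚ_p) = ⋃_{0 ≤ i ≤ c} B · n⁻(ϖ^i) · K₀(p^c)`, where `B` is the Borel
subgroup of upper triangular matrices and `K₀(p^c) ⊂ GL₂(o)` consists of the
integral matrices with unit determinant whose lower-left entry lies in `𝔭^c`. -/
theorem stmt17 (p : ℕ) [Fact p.Prime] (c : ℕ) (hc : 1 ≤ c)
    (g : Matrix (Fin 2) (Fin 2) ℚ_[p]) (hg : IsUnit g.det) :
    ∃ i : ℕ, i ≤ c ∧
      ∃ b κ : Matrix (Fin 2) (Fin 2) ℚ_[p],
        IsUnit b.det ∧ b 1 0 = 0 ∧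
        (∀ m n, ‖κ m n‖ ≤ 1) ∧ ‖κ.det‖ = 1 ∧
        ‖κ 1 0‖ ≤ (p : ℝ) ^ (-(c : ℤ)) ∧
        g = b * !![1, 0; (p : ℚ_[p]) ^ i, 1] * κ := by
  have hp1 : (1:ℝ) < (p:ℝ) := by exact_mod_cast (Fact.out : p.Prime).one_lt
  have hppos : (0:ℝ) < (p:ℝ) := lt_trans one_pos hp1
  have hpcpos : (0:ℝ) < (p : ℝ) ^ (-(c:ℤ)) := zpow_pos hppos _
  have hpc1 : (p : ℝ) ^ (-(c:ℤ)) ≤ 1 := by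
    calc (p : ℝ) ^ (-(c:ℤ)) ≤ (p:ℝ) ^ (0:ℤ) :=
      zpow_le_zpow_right₀ hp1.le (by omega)
    _ = 1 := zpow_zero _
  set u := g 1 0 with hu_def
  set v := g 1 1 with hv_def
  have hdet : g.det ≠ 0 := hg.ne_zero
  have hrow : u ≠ 0 ∨ v ≠ 0 := by
    by_contra h
    push_neg at h
    apply hdet
    rw [Matrix.det_fin_two, ← hu_def, ← hv_def, h.1, h.2]
    ring
  by_cases h1 : ‖v‖ < ‖u‖
  · -- case i = 0
    have hu : u ≠ 0 := by
      intro h; rw [h, norm_zero] at h1; exact absurd h1 (not_lt.2 (norm_nonneg v))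
    refine ⟨0, Nat.zero_le c, g * !![v/u, 1 - v/u; -1, 1], !![1, v/u - 1; 0, 1], ?_⟩
    have hM : !![(1:ℚ_[p]),0;(p:ℚ_[p])^(0:ℕ),1] * !![1, v/u - 1; 0, 1]
        = !![1, v/u - 1; 1, v/u] := by
      ext i j
      fin_cases i <;> fin_cases j <;> simp [Matrix.mul_apply, Fin.sum_univ_two]
    have hinv : !![v/u, 1 - v/u; -1, (1:ℚ_[p])] * !![1, v/u - 1; 1, v/u] = 1 := by
      ext i j
      fin_cases i <;> fin_cases j <;>
        simp [Matrix.mul_apply, Fin.sum_univ_two, Matrix.one_apply] <;> ring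
    have hb0 : g 1 0 * (!![v/u, 1 - v/u; -1, (1:ℚ_[p])]) 0 0
        + g 1 1 * (!![v/u, 1 - v/u; -1, (1:ℚ_[p])]) 1 0 = 0 := by
      have key : g 1 0 * (v/u) + g 1 1 * (-1) = 0 := by
        rw [← hu_def, ← hv_def]; field_simp; ring
      simpa using key
    obtain ⟨hbu, hbzero, hfact⟩ := stmt17_aux g _ _ hinv hb0 hg
    refine ⟨hbu, hbzero, ?_, ?_, ?_, ?_⟩
    · intro m n
      fin_cases m <;> fin_cases n <;> simp
      calc ‖v/u - 1‖ = ‖v/u + (-1)‖ := by ring_nf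
      _ ≤ max ‖v/u‖ ‖(-1 : ℚ_[p])‖ := Padic.nonarchimedean _ _
      _ ≤ 1 := by
          rw [norm_neg, norm_one, norm_div]
          exact max_le (le_of_lt ((div_lt_one (norm_pos_iff.2 hu)).2 h1)) le_rfl
    · rw [Matrix.det_fin_two_of]; simp
    · simp [hpcpos.le]
    · conv_rhs => rw [mul_assoc, hM]
      exact hfact
  · push_neg at h1
    have hv : v ≠ 0 := by
      rcases hrow with h | h
      · intro hv0
        rw [hv0, norm_zero] at h1
        exact h (norm_le_zero_iff.1 h1)
      · exact h
    set t := u / v with ht_def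
    have hvt : v * t = u := by rw [ht_def]; field_simp
    have ht1 : ‖t‖ ≤ 1 := by
      rw [ht_def, norm_div]
      exact div_le_one_of_le₀ h1 (norm_nonneg v)
    by_cases h2 : ‖t‖ ≤ (p:ℝ) ^ (-(c:ℤ))
    · -- case i = c
      refine ⟨c, le_rfl, g * !![1, 0; -t, 1], !![1, 0; t - (p:ℚ_[p])^c, 1], ?_⟩
      have hM : !![(1:ℚ_[p]),0;(p:ℚ_[p])^c,1] * !![1, 0; t - (p:ℚ_[p])^c, 1]
          = !![1, 0; t, 1] := by
        ext i j
        fin_cases i <;> fin_cases j <;>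
          simp [Matrix.mul_apply, Fin.sum_univ_two] <;> ring
      have hinv : !![(1:ℚ_[p]), 0; -t, 1] * !![1, 0; t, 1] = 1 := by
        ext i j
        fin_cases i <;> fin_cases j <;>
          simp [Matrix.mul_apply, Fin.sum_univ_two, Matrix.one_apply] <;> ring
      have hb0 : g 1 0 * (!![(1:ℚ_[p]), 0; -t, 1]) 0 0
          + g 1 1 * (!![(1:ℚ_[p]), 0; -t, 1]) 1 0 = 0 := by
        have key : g 1 0 * 1 + g 1 1 * (-t) = 0 := by
          rw [← hu_def, ← hv_def]; linear_combination -hvt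
        simpa using key
      obtain ⟨hbu, hbzero, hfact⟩ := stmt17_aux g _ _ hinv hb0 hg
      have hκ10 : ‖t - (p:ℚ_[p])^c‖ ≤ (p:ℝ) ^ (-(c:ℤ)) := by
        calc ‖t - (p:ℚ_[p])^c‖ = ‖t + (-(p:ℚ_[p])^c)‖ := by ring_nf
        _ ≤ max ‖t‖ ‖-(p:ℚ_[p])^c‖ := Padic.nonarchimedean _ _
        _ ≤ (p:ℝ) ^ (-(c:ℤ)) := by
            rw [norm_neg, Padic.norm_p_pow]
            exact max_le h2 le_rfl
      refine ⟨hbu, hbzero, ?_, ?_, ?_, ?_⟩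
      · intro m n
        fin_cases m <;> fin_cases n <;> simp
        exact le_trans hκ10 hpc1
      · rw [Matrix.det_fin_two_of]; simp
      · simpa using hκ10
      · conv_rhs => rw [mul_assoc, hM]
        exact hfact
    · -- case 0 < i < c
      push_neg at h2
      have ht0 : t ≠ 0 := by
        intro h; rw [h, norm_zero] at h2; exact absurd h2 (not_lt.2 hpcpos.le)
      have hvalnn : 0 ≤ t.valuation := (Padic.norm_le_one_iff_val_nonneg t).1 ht1
      set i := t.valuation.toNat with hi_def
      have hival : (i : ℤ) = t.valuation := Int.toNat_of_nonneg hvalnn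
      have hnt : ‖t‖ = (p:ℝ) ^ (-(i:ℤ)) := by
        rw [Padic.norm_eq_zpow_neg_valuation ht0, hival]
      have hic : i ≤ c := by
        rw [hnt] at h2
        have := (zpow_lt_zpow_iff_right₀ hp1).1 h2
        omega
      set ε := t / (p:ℚ_[p])^i with hε_def
      have hppne : ((p:ℚ_[p]))^i ≠ 0 := pow_ne_zero _ (by exact_mod_cast (Fact.out : p.Prime).ne_zero)
      have hε0 : ε ≠ 0 := div_ne_zero ht0 hppne
      have hεnorm : ‖ε‖ = 1 := by
        rw [hε_def, norm_div, hnt, Padic.norm_p_pow, div_self (ne_of_gt (zpow_pos hppos _))]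
      refine ⟨i, hic, g * !![ε⁻¹, 0; -t/ε, 1], !![ε, 0; 0, 1], ?_⟩
      have hM : !![(1:ℚ_[p]),0;(p:ℚ_[p])^i,1] * !![ε, 0; 0, 1]
          = !![ε, 0; t, 1] := by
        ext a j
        fin_cases a <;> fin_cases j <;>
          simp [Matrix.mul_apply, Fin.sum_univ_two, hε_def] <;> field_simp
      have hinv : !![ε⁻¹, 0; -t/ε, (1:ℚ_[p])] * !![ε, 0; t, 1] = 1 := by
        ext a j
        fin_cases a <;> fin_cases j <;>
          simp [Matrix.mul_apply, Fin.sum_univ_two, Matrix.one_apply] <;> field_simp <;> ring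
      have hb0 : g 1 0 * (!![ε⁻¹, 0; -t/ε, (1:ℚ_[p])]) 0 0
          + g 1 1 * (!![ε⁻¹, 0; -t/ε, (1:ℚ_[p])]) 1 0 = 0 := by
        have key : g 1 0 * ε⁻¹ + g 1 1 * (-t/ε) = 0 := by
          rw [← hu_def, ← hv_def, ← hvt]; field_simp; ring
        simpa using key
      obtain ⟨hbu, hbzero, hfact⟩ := stmt17_aux g _ _ hinv hb0 hg
      refine ⟨hbu, hbzero, ?_, ?_, ?_, ?_⟩
      · intro m n
        fin_cases m <;> fin_cases n <;> simp [hεnorm]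
      · rw [Matrix.det_fin_two_of]; simp [hεnorm]
      · simp [hpcpos.le]
      · conv_rhs => rw [mul_assoc, hM]
        exact hfact
end

section
/- Let F = Q_p (p odd). Suppose Y, Y+ϖ^{-l}, Z ∈ F with ν(Z) = j - c₂ for integers c₂/2 ≤ j < c₂, l = c₂ - j, and Z ≡ -Y - ϖ^{-l} mod p^{⌈j/2⌉+1-⌈c₂/2⌉}. Let β ∈ F with ν(β²) = -c₂. Then Z(Z - ϖ^{-j})/β² ≡ (Y+ϖ^{-l})(Y+ϖ^{-j}+ϖ^{-l})/β² mod p^{⌈c₁/2⌉-⌈i/2⌉-1}, for any integers i, c₁ with c₁ ≥ i > c₁/2, c₁ < c₂, and c₂ - j > c₁ - i. That is, substituting Z = -Y-ϖ^{-l} into the quadratic form Z(Z-ϖ^{-j})/β² incurs an error lying in p^{⌈c₁/2⌉-⌈i/2⌉-1}. -/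
/-!
Put `W = -Y - ϖ^{-l}`, so that `(Y + ϖ^{-l})(Y + ϖ^{-j} + ϖ^{-l}) = W(W - ϖ^{-j})` and the
difference to estimate is `Z(Z - ϖ^{-j}) - W(W - ϖ^{-j}) = (Z - W)(Z + W - ϖ^{-j})`.
The first factor is the congruence error, of norm at most `p^{-(⌈j/2⌉+1-⌈c₂/2⌉)}`; by the
ultrametric inequality the second has norm at most `p^j`, since `‖Z‖ = p^{c₂-j} ≤ p^j`.
Dividing by `β²`, of norm `p^{c₂}`, the claim reduces to an inequality between the exponents.
-/

theorem IsUltrametricDist.norm_sub_le_max {R : Type*} [SeminormedAddCommGroup R]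
    [IsUltrametricDist R] (x y : R) : ‖x - y‖ ≤ max ‖x‖ ‖y‖ := by
  simpa only [sub_eq_add_neg, norm_neg] using norm_add_le_max x (-y)

theorem IsUltrametricDist.norm_mul_sub_sub_mul_sub_le {R : Type*} [SeminormedCommRing R]
    [IsUltrametricDist R] {x w a : R} {r s : ℝ} (hxw : ‖x - w‖ ≤ r) (hx : ‖x‖ ≤ s)
    (ha : ‖a‖ ≤ s) (hrs : r ≤ s) :
    ‖x * (x - a) - w * (w - a)‖ ≤ r * s := by
  have hw : ‖w‖ ≤ s :=
    calc ‖w‖ = ‖x - (x - w)‖ := by rw [sub_sub_cancel]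
      _ ≤ max ‖x‖ ‖x - w‖ := norm_sub_le_max _ _
      _ ≤ s := max_le hx (hxw.trans hrs)
  have hsum : ‖x + w - a‖ ≤ s :=
    (norm_sub_le_max _ _).trans (max_le ((norm_add_le_max _ _).trans (max_le hx hw)) ha)
  calc ‖x * (x - a) - w * (w - a)‖ = ‖(x - w) * (x + w - a)‖ := by ring_nf
    _ ≤ ‖x - w‖ * ‖x + w - a‖ := norm_mul_le _ _
    _ ≤ r * s := mul_le_mul hxw hsum (norm_nonneg _) ((norm_nonneg _).trans hxw)

theorem stmt18_general (p : ℕ) [Fact p.Prime]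
    (c₁ c₂ i j l : ℤ)
    (hj1 : j < c₂) (hj2 : c₂ ≤ 2 * j)
    (hij : c₁ - i < c₂ - j)
    (Y Z β : ℚ_[p]) (hβ0 : β ≠ 0) (hβv : (β ^ 2).valuation = -c₂)
    (hZ0 : Z ≠ 0) (hZv : Z.valuation = j - c₂)
    (hcong : ‖Z - (-Y - (p : ℚ_[p]) ^ (-l))‖ ≤
      (p : ℝ) ^ (-((j + 1) / 2 + 1 - (c₂ + 1) / 2))) :
    ‖Z * (Z - (p : ℚ_[p]) ^ (-j)) / β ^ 2 -
        (Y + (p : ℚ_[p]) ^ (-l)) * (Y + (p : ℚ_[p]) ^ (-j) + (p : ℚ_[p]) ^ (-l)) / β ^ 2‖ ≤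
      (p : ℝ) ^ (-((c₁ + 1) / 2 - (i + 1) / 2 - 1)) := by
  have hp1 : (1 : ℝ) < p := by exact_mod_cast (Fact.out : p.Prime).one_lt
  have hβ : ‖β ^ 2‖ = (p : ℝ) ^ c₂ := by
    rw [Padic.norm_eq_zpow_neg_valuation (pow_ne_zero 2 hβ0), hβv, neg_neg]
  have hZ : ‖Z‖ ≤ (p : ℝ) ^ j := by
    rw [Padic.norm_eq_zpow_neg_valuation hZ0, hZv]
    exact zpow_le_zpow_right₀ hp1.le (by omega)
  have hϖj : ‖(p : ℚ_[p]) ^ (-j)‖ ≤ (p : ℝ) ^ j := by rw [Padic.norm_p_zpow, neg_neg]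
  have hnumerator := IsUltrametricDist.norm_mul_sub_sub_mul_sub_le hcong hZ hϖj
    (zpow_le_zpow_right₀ hp1.le (by omega))
  rw [← sub_div, norm_div, hβ, div_le_iff₀ (by positivity), ← zpow_add₀ (by positivity)]
  calc _ = ‖Z * (Z - (p : ℚ_[p]) ^ (-j)) - (-Y - (p : ℚ_[p]) ^ (-l)) *
          (-Y - (p : ℚ_[p]) ^ (-l) - (p : ℚ_[p]) ^ (-j))‖ := by ring_nf
    _ ≤ _ := hnumerator
    _ = _ := (zpow_add₀ (by positivity) _ _).symm
    _ ≤ _ := zpow_le_zpow_right₀ hp1.le (by omega)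

/-- The substitution step in Lemma 3.35: substituting `Z = -Y - ϖ^{-l}` into
the quadratic form `Z(Z-ϖ^{-j})/β²` incurs an error lying in
`𝔭^{⌈c₁/2⌉-⌈i/2⌉-1}`:
`Z(Z-ϖ^{-j})/β² ≡ (Y+ϖ^{-l})(Y+ϖ^{-j}+ϖ^{-l})/β² mod 𝔭^{⌈c₁/2⌉-⌈i/2⌉-1}`. -/
theorem stmt18 (p : ℕ) [Fact p.Prime] (hp : Odd p)
    (c₁ c₂ i j l : ℤ) (hc₁pos : 0 < c₁) (hcc : c₁ < c₂)
    (hi1 : i ≤ c₁) (hi2 : c₁ < 2 * i)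
    (hj1 : j < c₂) (hj2 : c₂ ≤ 2 * j)
    (hij : c₁ - i < c₂ - j) (hl : l = c₂ - j)
    (Y Z β : ℚ_[p]) (hβ0 : β ≠ 0) (hβv : (β ^ 2).valuation = -c₂)
    (hZ0 : Z ≠ 0) (hZv : Z.valuation = j - c₂)
    (hcong : ‖Z - (-Y - (p : ℚ_[p]) ^ (-l))‖ ≤
      (p : ℝ) ^ (-((j + 1) / 2 + 1 - (c₂ + 1) / 2))) :
    ‖Z * (Z - (p : ℚ_[p]) ^ (-j)) / β ^ 2 -
        (Y + (p : ℚ_[p]) ^ (-l)) * (Y + (p : ℚ_[p]) ^ (-j) + (p : ℚ_[p]) ^ (-l)) / β ^ 2‖ ≤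
      (p : ℝ) ^ (-((c₁ + 1) / 2 - (i + 1) / 2 - 1)) :=
  stmt18_general p c₁ c₂ i j l hj1 hj2 hij Y Z β hβ0 hβv hZ0 hZv hcong
end
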